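/- arXiv:1807.02482 — 2 statements merged into one kernel-verified Lean document; each statement's English description precedes it below -/
import Mathlib

section
/- (De Giorgi lemma) Let f : [0,∞) → [0,∞) be right-continuous, non-increasing with f(s) → 0 as s → ∞, and suppose there exist α > 0 and A > 0 such that for all s ≥ 0 and all 0 ≤ r ≤ 1, r · f(s+r) ≤ A · f(s)^{1+α}. Let s₀ ≥ 0 satisfy f(s₀)^α ≤ (2A)^{−1}. Then f(s) = 0 for all s > s₀ + 2A(1 − 2^{−α})^{−1} f(s₀)^α. -/
/-!
Put `q = 2^{-α}` and `c = f s₀`. Starting from `s₀` and advancing by the steps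
`r_k = 2A c^α q^k ≤ 1`, the iteration inequality halves the bound at each step:
if `f t ≤ c 2^{-k}` then `f (t + r_k) ≤ A (c 2^{-k})^{1+α} / r_k = c 2^{-(k+1)}`.
The total distance travelled is at most `2A c^α / (1 - q)`, so by monotonicity `f` is below
`c 2^{-k}` for every `k` beyond that point.
-/

open Filter Set

lemma geom_sum_range_le_inv_one_sub {q : ℝ} (hq0 : 0 ≤ q) (hq1 : q < 1) (k : ℕ) :
    ∑ i ∈ Finset.range k, q ^ i ≤ (1 - q)⁻¹ := by
  rw [Finset.range_eq_Ico, ← one_div, ← pow_zero q]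
  exact geom_sum_Ico_le_of_lt_one hq0 hq1

section DeGiorgi

variable {f : ℝ → ℝ} {α A : ℝ}

lemma le_div_of_iteration_ineq
    (hiter : ∀ s, 0 ≤ s → ∀ r, 0 ≤ r → r ≤ 1 → r * f (s + r) ≤ A * f s ^ (1 + α))
    (hA : 0 ≤ A) (hα : 0 ≤ α) {s r M : ℝ} (hs : 0 ≤ s) (hr : 0 < r) (hr1 : r ≤ 1)
    (hfs : 0 ≤ f s) (hM : f s ≤ M) :
    f (s + r) ≤ A * M ^ (1 + α) / r := by
  rw [le_div_iff₀' hr]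
  calc r * f (s + r) ≤ A * f s ^ (1 + α) := hiter s hs r hr.le hr1
    _ ≤ A * M ^ (1 + α) := by gcongr

lemma mul_rpow_one_add_half_pow {c : ℝ} (hc : 0 < c) (k : ℕ) :
    A * (c * 2⁻¹ ^ k) ^ (1 + α) = 2 * A * c ^ α * (2 ^ (-α)) ^ k * (c * 2⁻¹ ^ (k + 1)) := by
  have hpow : ((2 : ℝ)⁻¹ ^ k) ^ α = (2 ^ (-α)) ^ k := by
    rw [← Real.rpow_pow_comm (by norm_num), Real.inv_rpow (by norm_num), Real.rpow_neg (by norm_num)]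
  rw [Real.rpow_add (by positivity), Real.rpow_one, Real.mul_rpow hc.le (by positivity), hpow,
    pow_succ]
  ring

lemma le_half_pow_of_iteration_ineq (hnonneg : ∀ s, 0 ≤ s → 0 ≤ f s)
    (hiter : ∀ s, 0 ≤ s → ∀ r, 0 ≤ r → r ≤ 1 → r * f (s + r) ≤ A * f s ^ (1 + α))
    (hA : 0 < A) (hα : 0 ≤ α) {s₀ : ℝ} (hs₀ : 0 ≤ s₀) (hc : 0 < f s₀)
    (hsmall : 2 * A * f s₀ ^ α ≤ 1) (k : ℕ) :
    f (s₀ + 2 * A * f s₀ ^ α * ∑ i ∈ Finset.range k, (2 ^ (-α)) ^ i) ≤ f s₀ * 2⁻¹ ^ k := by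
  induction k with
  | zero => simp
  | succ k ih =>
    set t := s₀ + 2 * A * f s₀ ^ α * ∑ i ∈ Finset.range k, (2 ^ (-α)) ^ i
    have ht : 0 ≤ t := by positivity
    have hq1 : (2 : ℝ) ^ (-α) ≤ 1 := Real.rpow_le_one_of_one_le_of_nonpos one_le_two (by linarith)
    have hr1 : 2 * A * f s₀ ^ α * (2 ^ (-α)) ^ k ≤ 1 :=
      (mul_le_of_le_one_right (by positivity) (pow_le_one₀ (by positivity) hq1)).trans hsmall
    rw [Finset.sum_range_succ, mul_add, ← add_assoc]
    refine (le_div_of_iteration_ineq hiter hA.le hα ht (by positivity) hr1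
      (hnonneg t ht) ih).trans_eq ?_
    rw [mul_rpow_one_add_half_pow hc, mul_div_cancel_left₀ _ (by positivity)]

end DeGiorgi

theorem stmt_7_general (f : ℝ → ℝ)
    (hnonneg : ∀ s, 0 ≤ s → 0 ≤ f s)
    (hmono : AntitoneOn f (Ici 0))
    (α A : ℝ) (hα : 0 < α) (hA : 0 < A)
    (hiter : ∀ s, 0 ≤ s → ∀ r, 0 ≤ r → r ≤ 1 → r * f (s + r) ≤ A * f s ^ (1 + α))
    (s₀ : ℝ) (hs₀ : 0 ≤ s₀) (hsmall : f s₀ ^ α ≤ (2 * A)⁻¹) :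
    ∀ s, s > s₀ + 2 * A * (1 - 2 ^ (-α))⁻¹ * f s₀ ^ α → f s = 0 := by
  intro s hs
  have hq1 : (2 : ℝ) ^ (-α) < 1 := Real.rpow_lt_one_of_one_lt_of_neg one_lt_two (by linarith)
  have hs₀s : s₀ ≤ s := by
    have : 0 ≤ 2 * A * (1 - 2 ^ (-α))⁻¹ * f s₀ ^ α := by
      have := sub_pos.2 hq1
      have := hnonneg s₀ hs₀
      positivity
    linarith
  have hs0 : 0 ≤ s := hs₀.trans hs₀s
  refine le_antisymm ?_ (hnonneg s hs0)
  rcases (hnonneg s₀ hs₀).eq_or_lt with hc | hc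
  · exact hc ▸ hmono hs₀ hs0 hs₀s
  have hsmall' : 2 * A * f s₀ ^ α ≤ 1 := by
    calc 2 * A * f s₀ ^ α ≤ 2 * A * (2 * A)⁻¹ := by gcongr
      _ = 1 := mul_inv_cancel₀ (by positivity)
  have hbound (k : ℕ) : f s ≤ f s₀ * 2⁻¹ ^ k := by
    have htk : s₀ + 2 * A * f s₀ ^ α * ∑ i ∈ Finset.range k, (2 ^ (-α)) ^ i ≤ s := by
      calc _ ≤ s₀ + 2 * A * f s₀ ^ α * (1 - 2 ^ (-α))⁻¹ := by
            gcongr; exact geom_sum_range_le_inv_one_sub (by positivity) hq1 k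
        _ ≤ s := by linarith
    exact (hmono (mem_Ici.2 (by positivity)) hs0 htk).trans
      (le_half_pow_of_iteration_ineq hnonneg hiter hA hα.le hs₀ hc hsmall' k)
  exact ge_of_tendsto' (by simpa using (tendsto_pow_atTop_nhds_zero_of_lt_one
    (by norm_num : (0 : ℝ) ≤ 2⁻¹) (by norm_num)).const_mul (f s₀)) hbound

theorem stmt_7 (f : ℝ → ℝ)
    (hnonneg : ∀ s, 0 ≤ s → 0 ≤ f s)
    (hrc : ∀ s, 0 ≤ s → ContinuousWithinAt f (Ici s) s)
    (hmono : AntitoneOn f (Ici 0))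
    (hdecay : Tendsto f atTop (nhds 0))
    (α A : ℝ) (hα : 0 < α) (hA : 0 < A)
    (hiter : ∀ s, 0 ≤ s → ∀ r, 0 ≤ r → r ≤ 1 → r * f (s + r) ≤ A * f s ^ (1 + α))
    (s₀ : ℝ) (hs₀ : 0 ≤ s₀) (hsmall : f s₀ ^ α ≤ (2 * A)⁻¹) :
    ∀ s, s > s₀ + 2 * A * (1 - 2 ^ (-α))⁻¹ * f s₀ ^ α → f s = 0 :=
  stmt_7_general f hnonneg hmono α A hα hA hiter s₀ hs₀ hsmall
end

section
/- Let b : (0,∞) → [0,∞) satisfy, for some constants A > 0 and α > 0: t · b(s+t) ≤ A · b(s)^{1+α} for all s > 0, t ∈ [0,1], and b(s) ≤ c/s^{β} for some c, β > 0 and all s > 0 (so b decays). If moreover b is right-continuous and non-increasing, then there exists S, depending only on A, α, c, β, such that b(s) = 0 for all s > S. -/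
/-!
De Giorgi iteration. Once `A * b s₀ ^ α ≤ 1/2`, stepping from `s_k` to `s_{k+1} = s_k + 2^{-αk}`
halves the bound `b s_k ≤ 2^{-k} b s₀`, since the step length `2^{-αk}` is exactly the factor
that the power `1 + α` gains. The steps are summable, so `b` vanishes beyond
`s₀ + 1/(1 - 2^{-α})`; the decay bound `b s ≤ c / s^β` provides such an `s₀` explicitly.
-/

open Filter Set Finset

lemma le_half_of_mul_le_mul_rpow_one_add {A α B ε x y : ℝ} (hA : 0 ≤ A) (hα : 0 < α)
    (hε : 0 < ε) (hx : 0 ≤ x) (hxB : x ≤ B * ε) (hsmall : A * B ^ α ≤ 1 / 2)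
    (hiter : ε ^ α * y ≤ A * x ^ (1 + α)) : y ≤ B * ε / 2 := by
  have hB : 0 ≤ B := nonneg_of_mul_nonneg_left (hx.trans hxB) hε
  have hxα : x ^ α ≤ B ^ α * ε ^ α := by
    rw [← Real.mul_rpow hB hε.le]
    exact Real.rpow_le_rpow hx hxB hα.le
  have : ε ^ α * y ≤ ε ^ α * (B * ε / 2) :=
    calc ε ^ α * y ≤ A * (x * x ^ α) := by
          rwa [Real.rpow_add' hx (by positivity), Real.rpow_one] at hiter
      _ ≤ A * ((B * ε) * (B ^ α * ε ^ α)) := by gcongr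
      _ = (A * B ^ α) * (B * ε * ε ^ α) := by ring
      _ ≤ 1 / 2 * (B * ε * ε ^ α) := by gcongr
      _ = ε ^ α * (B * ε / 2) := by ring
  exact le_of_mul_le_mul_left this (by positivity)

section Iteration

variable {b : ℝ → ℝ} {A α s₀ : ℝ}

lemma le_half_pow_of_iter (hA : 0 ≤ A) (hα : 0 < α) (hs₀ : 0 < s₀)
    (hnn : ∀ s, 0 < s → 0 ≤ b s)
    (hiter : ∀ s, 0 < s → ∀ t, 0 ≤ t → t ≤ 1 → t * b (s + t) ≤ A * b s ^ (1 + α))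
    (hsmall : A * b s₀ ^ α ≤ 1 / 2) (k : ℕ) :
    b (s₀ + ∑ j ∈ range k, ((1 / 2 : ℝ) ^ j) ^ α) ≤ b s₀ * (1 / 2) ^ k := by
  induction k with
  | zero => simp
  | succ k ih =>
    have hsk : 0 < s₀ + ∑ j ∈ range k, ((1 / 2 : ℝ) ^ j) ^ α := by positivity
    have ht : ((1 / 2 : ℝ) ^ k) ^ α ≤ 1 :=
      Real.rpow_le_one (by positivity) (pow_le_one₀ (by norm_num) (by norm_num)) hα.le
    have hnext := hiter _ hsk _ (by positivity) ht
    rw [add_assoc, ← sum_range_succ] at hnext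
    rw [pow_succ, ← mul_assoc, ← div_eq_mul_one_div]
    exact le_half_of_mul_le_mul_rpow_one_add hA hα (by positivity) (hnn _ hsk) ih hsmall hnext

theorem eq_zero_of_iter_of_mul_rpow_le_half (hA : 0 ≤ A) (hα : 0 < α) (hs₀ : 0 < s₀)
    (hnn : ∀ s, 0 < s → 0 ≤ b s) (hmono : AntitoneOn b (Ioi 0))
    (hiter : ∀ s, 0 < s → ∀ t, 0 ≤ t → t ≤ 1 → t * b (s + t) ≤ A * b s ^ (1 + α))
    (hsmall : A * b s₀ ^ α ≤ 1 / 2) {s : ℝ} (hs : s₀ + 1 / (1 - (1 / 2 : ℝ) ^ α) < s) :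
    b s = 0 := by
  have hr : (1 / 2 : ℝ) ^ α < 1 := Real.rpow_lt_one (by norm_num) (by norm_num) hα
  have hsum (k : ℕ) : ∑ j ∈ range k, ((1 / 2 : ℝ) ^ j) ^ α ≤ 1 / (1 - (1 / 2 : ℝ) ^ α) := by
    simp_rw [← Real.rpow_pow_comm (by norm_num : (0 : ℝ) ≤ 1 / 2), range_eq_Ico]
    simpa using geom_sum_Ico_le_of_lt_one (m := 0) (n := k) (by positivity) hr
  have hs_pos : 0 < s := lt_trans (by have := sub_pos.2 hr; positivity) hs
  have hbound (k : ℕ) : b s ≤ b s₀ * (1 / 2) ^ k :=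
    (hmono (mem_Ioi.2 (by positivity)) hs_pos (by linarith [hsum k])).trans
      (le_half_pow_of_iter hA hα hs₀ hnn hiter hsmall k)
  have hlim : Tendsto (fun k : ℕ => b s₀ * (1 / 2 : ℝ) ^ k) atTop (nhds 0) := by
    simpa using (tendsto_pow_atTop_nhds_zero_of_lt_one (r := (1 / 2 : ℝ))
      (by norm_num) (by norm_num)).const_mul (b s₀)
  exact le_antisymm (ge_of_tendsto' hlim hbound) (hnn s hs_pos)

end Iteration

/-- The point `s₀` where the decay bound `c / s₀ ^ β` reaches `(2 * A) ^ (-1/α)`. -/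
noncomputable def decayThreshold (A α c β : ℝ) : ℝ := (c * (2 * A) ^ α⁻¹) ^ β⁻¹

lemma decayThreshold_pos {A α c β : ℝ} (hA : 0 < A) (hc : 0 < c) :
    0 < decayThreshold A α c β := by
  unfold decayThreshold; positivity

lemma decayThreshold_rpow {A α c β : ℝ} (hA : 0 < A) (hc : 0 < c) (hβ : 0 < β) :
    decayThreshold A α c β ^ β = c * (2 * A) ^ α⁻¹ :=
  Real.rpow_inv_rpow (by positivity) hβ.ne'

lemma mul_rpow_le_half_at_decayThreshold {b : ℝ → ℝ} {A α c β : ℝ} (hA : 0 < A) (hα : 0 < α)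
    (hc : 0 < c) (hβ : 0 < β) (hnn : ∀ s, 0 < s → 0 ≤ b s)
    (hdecay : ∀ s, 0 < s → b s ≤ c / s ^ β) :
    A * b (decayThreshold A α c β) ^ α ≤ 1 / 2 := by
  have hs₀ := decayThreshold_pos (α := α) (β := β) hA hc
  set s₀ := decayThreshold A α c β
  have hK : 0 < (2 * A) ^ α⁻¹ := by positivity
  have hb : b s₀ * (2 * A) ^ α⁻¹ ≤ 1 :=
    calc b s₀ * (2 * A) ^ α⁻¹ ≤ c / s₀ ^ β * (2 * A) ^ α⁻¹ := by gcongr; exact hdecay s₀ hs₀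
      _ = 1 := by rw [decayThreshold_rpow hA hc hβ]; field_simp
  have hpow := Real.rpow_le_rpow (mul_nonneg (hnn s₀ hs₀) hK.le) hb hα.le
  rw [Real.mul_rpow (hnn s₀ hs₀) hK.le, Real.rpow_inv_rpow (by positivity) hα.ne',
    Real.one_rpow] at hpow
  linarith

/-- There is a threshold `S`, depending only on the constants `A, α, c, β`, beyond which
any function `b` satisfying the iteration inequality and the decay bound vanishes. -/
theorem stmt_8 :
    ∃ S : ℝ → ℝ → ℝ → ℝ → ℝ,
      ∀ (b : ℝ → ℝ) (A α c β : ℝ), 0 < A → 0 < α → 0 < c → 0 < β →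
        (∀ s, 0 < s → 0 ≤ b s) →
        (∀ s, 0 < s → ContinuousWithinAt b (Ici s) s) →
        AntitoneOn b (Ioi 0) →
        (∀ s, 0 < s → ∀ t, 0 ≤ t → t ≤ 1 → t * b (s + t) ≤ A * b s ^ (1 + α)) →
        (∀ s, 0 < s → b s ≤ c / s ^ β) →
        ∀ s, s > S A α c β → b s = 0 := by
  refine ⟨fun A α c β => decayThreshold A α c β + 1 / (1 - (1 / 2 : ℝ) ^ α), ?_⟩
  intro b A α c β hA hα hc hβ hnn _ hmono hiter hdecay s hs
  exact eq_zero_of_iter_of_mul_rpow_le_half hA.le hα (decayThreshold_pos hA hc) hnn hmono hiter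
    (mul_rpow_le_half_at_decayThreshold hA hα hc hβ hnn hdecay) hs
end
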